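/- Let E be the elliptic curve y² = x³ − 10731x + 408170 over ℝ. The point P = (7, 126·√21) lies on E, [2]P = (70, 0), and P has order 4 in E(ℝ). -/

import Mathlib

/-! The tangent to `W6` at `P = (7, 126√21)` has slope `-2√21`, so its third intersection with
the curve has `x = (-2√21)² - 7 - 7 = 70`, and `(70, 0)`, having `y = 0`, is a point of order 2.
Hence `P` has order 4. -/

open WeierstrassCurve WeierstrassCurve.Affine

def W6 : WeierstrassCurve.Affine ℝ := ⟨0, 0, 0, -10731, 408170⟩

theorem addOrderOf_eq_four_of_two_nsmul {G : Type*} [AddMonoid G] {P Q : G}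
    (hPQ : 2 • P = Q) (hQ : Q ≠ 0) (hQ₂ : 2 • Q = 0) : addOrderOf P = 4 :=
  addOrderOf_eq_prime_pow (p := 2) (n := 1) (by simpa [hPQ] using hQ)
    (by rw [pow_succ, mul_nsmul, pow_one, hPQ, hQ₂])

lemma sq_sqrt_21 : Real.sqrt 21 ^ 2 = 21 := Real.sq_sqrt (by norm_num)

lemma sqrt_21_pos : 0 < Real.sqrt 21 := Real.sqrt_pos.mpr (by norm_num)

namespace W6

lemma Δ_ne_zero : W6.Δ ≠ 0 := by
  simp only [W6, WeierstrassCurve.Δ, b₂, b₄, b₆, b₈]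
  norm_num

lemma nonsingular_P : W6.Nonsingular 7 (126 * Real.sqrt 21) := by
  rw [nonsingular_iff, equation_iff]
  simp only [W6]
  refine ⟨by nlinarith [sq_sqrt_21], Or.inr (by nlinarith [sqrt_21_pos])⟩

lemma nonsingular_Q : W6.Nonsingular 70 0 := by
  rw [nonsingular_iff, equation_iff]
  simp only [W6]
  norm_num

lemma negY_P : W6.negY 7 (126 * Real.sqrt 21) = -(126 * Real.sqrt 21) := by
  simp [negY, W6]

lemma Y_ne_negY_P : 126 * Real.sqrt 21 ≠ W6.negY 7 (126 * Real.sqrt 21) := by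
  rw [negY_P]
  nlinarith [sqrt_21_pos]

lemma slope_P : W6.slope 7 7 (126 * Real.sqrt 21) (126 * Real.sqrt 21) = -2 * Real.sqrt 21 := by
  rw [slope_of_Y_ne rfl Y_ne_negY_P, negY_P, div_eq_iff (by nlinarith [sqrt_21_pos])]
  simp only [W6]
  nlinarith [sq_sqrt_21]

lemma addX_P : W6.addX 7 7 (W6.slope 7 7 (126 * Real.sqrt 21) (126 * Real.sqrt 21)) = 70 := by
  rw [slope_P]
  simp only [addX, W6]
  nlinarith [sq_sqrt_21]

lemma addY_P : W6.addY 7 7 (126 * Real.sqrt 21)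
    (W6.slope 7 7 (126 * Real.sqrt 21) (126 * Real.sqrt 21)) = 0 := by
  rw [addY, negY, negAddY, addX_P, slope_P]
  simp only [W6]
  ring

lemma two_nsmul_P : 2 • Point.some _ _ nonsingular_P = Point.some _ _ nonsingular_Q := by
  rw [two_nsmul, Point.add_self_of_Y_ne Y_ne_negY_P, Point.some.injEq]
  exact ⟨addX_P, addY_P⟩

lemma two_nsmul_Q : 2 • Point.some _ _ nonsingular_Q = 0 := by
  rw [two_nsmul]
  exact Point.add_self_of_Y_eq (by simp [negY, W6])

end W6

/-- On `y² = x³ - 10731x + 408170` over `ℝ`: the point `P = (7, 126√21)` lies on the curve,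
`[2]P = (70, 0)`, and `P` has order 4. -/
theorem quasi_critical_points_of_6T7 :
    W6.Δ ≠ 0 ∧
    ∃ (hP : W6.Nonsingular 7 (126 * Real.sqrt 21)) (hQ : W6.Nonsingular 70 0),
      2 • Point.some _ _ hP = Point.some _ _ hQ ∧
      addOrderOf (Point.some _ _ hP) = 4 :=
  ⟨W6.Δ_ne_zero, W6.nonsingular_P, W6.nonsingular_Q, W6.two_nsmul_P,
    addOrderOf_eq_four_of_two_nsmul W6.two_nsmul_P (Point.some_ne_zero _) W6.two_nsmul_Q⟩
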